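/- Let A be a real n×n matrix, C a real m×n matrix, and Q a real symmetric n×n matrix satisfying the Lyapunov equation AᵀQ + QA = −CᵀC. Let x₀ ∈ ℝⁿ and suppose the function V(t) = (exp(tA)·x₀)ᵀ Q (exp(tA)·x₀) tends to 0 as t → ∞. Then the improper integral ∫₀^∞ ‖C · exp(tA) · x₀‖² dt converges and equals x₀ᵀQx₀, where ‖·‖ is the Euclidean norm on ℝᵐ. -/

import Mathlib

open Matrix MeasureTheory Filter

/-- H₂-norm computation via the observability Gramian: if the symmetric matrix `Q` satisfies
the Lyapunov equation `AᵀQ + QA = −CᵀC` and `V(t) = (exp(tA)x₀)ᵀQ(exp(tA)x₀) → 0` as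
`t → ∞`, then `∫₀^∞ ‖C·exp(tA)·x₀‖² dt` converges and equals `x₀ᵀQx₀`,
with the Euclidean norm on `ℝᵐ`. -/
theorem stmt3 (n m : ℕ) (A : Matrix (Fin n) (Fin n) ℝ) (C : Matrix (Fin m) (Fin n) ℝ)
    (Q : Matrix (Fin n) (Fin n) ℝ) (hQsymm : Q.IsSymm)
    (hLyap : Aᵀ * Q + Q * A = -(Cᵀ * C))
    (x₀ : Fin n → ℝ)
    (hV : Tendsto
      (fun t : ℝ =>
        ((NormedSpace.exp (t • A)) *ᵥ x₀) ⬝ᵥ (Q *ᵥ ((NormedSpace.exp (t • A)) *ᵥ x₀)))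
      atTop (nhds 0)) :
    IntegrableOn
        (fun t : ℝ =>
          ‖(WithLp.equiv 2 (Fin m → ℝ)).symm ((C * NormedSpace.exp (t • A)) *ᵥ x₀)‖ ^ 2)
        (Set.Ioi (0 : ℝ)) ∧
      ∫ t in Set.Ioi (0 : ℝ),
          ‖(WithLp.equiv 2 (Fin m → ℝ)).symm ((C * NormedSpace.exp (t • A)) *ᵥ x₀)‖ ^ 2 =
        x₀ ⬝ᵥ (Q *ᵥ x₀) := by
  letI : NormedRing (Matrix (Fin n) (Fin n) ℝ) := Matrix.linftyOpNormedRing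
  letI : NormedAlgebra ℝ (Matrix (Fin n) (Fin n) ℝ) := Matrix.linftyOpNormedAlgebra
  letI : CompleteSpace (Matrix (Fin n) (Fin n) ℝ) := FiniteDimensional.complete ℝ _
  set f : ℝ → (Fin n → ℝ) := fun t => NormedSpace.exp (t • A) *ᵥ x₀ with hfdef
  set V : ℝ → ℝ := fun t => f t ⬝ᵥ (Q *ᵥ f t) with hVdef
  -- derivative of f
  let L : Matrix (Fin n) (Fin n) ℝ →ₗ[ℝ] (Fin n → ℝ) :=
    { toFun := fun M => M *ᵥ x₀, map_add' := by intro M N; simp [add_mulVec],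
      map_smul' := by intro c M; simp [smul_mulVec] }
  have hf : ∀ t : ℝ, HasDerivAt f (A *ᵥ f t) t := by
    intro t
    have h1 := (L.toContinuousLinearMap.hasFDerivAt.comp_hasDerivAt t
      (hasDerivAt_exp_smul_const' A t))
    have h2 : L.toContinuousLinearMap (A * NormedSpace.exp (t • A)) = A *ᵥ f t := by
      simp [L, hfdef, ← mulVec_mulVec]
    replace h1 := h1.congr_deriv h2
    exact h1
  have hfi : ∀ (i : Fin n) (t : ℝ), HasDerivAt (fun t => f t i) ((A *ᵥ f t) i) t := by
    intro i t
    have := (ContinuousLinearMap.proj (R := ℝ) (φ := fun _ : Fin n => ℝ)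
      i).hasFDerivAt.comp_hasDerivAt t (hf t)
    exact this
  -- norm squared as dot product
  have hnorm : ∀ (v : Fin m → ℝ),
      ‖(WithLp.equiv 2 (Fin m → ℝ)).symm v‖ ^ 2 = v ⬝ᵥ v := by
    intro v
    rw [EuclideanSpace.norm_eq, Real.sq_sqrt (by positivity)]
    simp [dotProduct, sq]
  -- derivative of V
  have hVderiv : ∀ t : ℝ, HasDerivAt V
      (-(‖(WithLp.equiv 2 (Fin m → ℝ)).symm ((C * NormedSpace.exp (t • A)) *ᵥ x₀)‖ ^ 2)) t := by
    intro t
    have key : HasDerivAt V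
        ((A *ᵥ f t) ⬝ᵥ (Q *ᵥ f t) + f t ⬝ᵥ (Q *ᵥ (A *ᵥ f t))) t := by
      have : HasDerivAt V
          (∑ i, ((A *ᵥ f t) i * (Q *ᵥ f t) i + f t i * (Q *ᵥ (A *ᵥ f t)) i)) t := by
        have : HasDerivAt (fun t => ∑ i, f t i * (Q *ᵥ f t) i)
            (∑ i, ((A *ᵥ f t) i * (Q *ᵥ f t) i + f t i * (Q *ᵥ (A *ᵥ f t)) i)) t := by
          apply HasDerivAt.fun_sum
          intro i _
          have hQf : HasDerivAt (fun t => (Q *ᵥ f t) i) ((Q *ᵥ (A *ᵥ f t)) i) t := by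
            have : (fun t => (Q *ᵥ f t) i) = fun t => ∑ j, Q i j * f t j := by
              funext t; simp [mulVec, dotProduct]
            rw [this]
            have : (Q *ᵥ (A *ᵥ f t)) i = ∑ j, Q i j * (A *ᵥ f t) j := by
              simp [mulVec, dotProduct]
            rw [this]
            exact HasDerivAt.fun_sum fun j _ => (hfi j t).const_mul (Q i j)
          exact (hfi i t).mul hQf
        exact this
      rw [Finset.sum_add_distrib] at this
      convert this using 2 <;> simp [dotProduct]
    have halg : (A *ᵥ f t) ⬝ᵥ (Q *ᵥ f t) + f t ⬝ᵥ (Q *ᵥ (A *ᵥ f t))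
        = -(‖(WithLp.equiv 2 (Fin m → ℝ)).symm ((C * NormedSpace.exp (t • A)) *ᵥ x₀)‖ ^ 2) := by
      have h1 : ∀ x : Fin n → ℝ, (A *ᵥ x) ⬝ᵥ (Q *ᵥ x) = x ⬝ᵥ ((Aᵀ * Q) *ᵥ x) := by
        intro x
        symm
        rw [dotProduct_mulVec, ← vecMul_vecMul, vecMul_transpose, ← dotProduct_mulVec]
      have h2 : ∀ x : Fin n → ℝ, x ⬝ᵥ (Q *ᵥ (A *ᵥ x)) = x ⬝ᵥ ((Q * A) *ᵥ x) := by
        intro x; rw [mulVec_mulVec]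
      have h4 : ∀ x : Fin n → ℝ, x ⬝ᵥ ((Cᵀ * C) *ᵥ x) = (C *ᵥ x) ⬝ᵥ (C *ᵥ x) := by
        intro x
        rw [dotProduct_mulVec, ← vecMul_vecMul, vecMul_transpose, ← dotProduct_mulVec]
      have h3 : (C * NormedSpace.exp (t • A)) *ᵥ x₀ = C *ᵥ f t := by
        rw [← mulVec_mulVec]
      rw [h1, h2, ← dotProduct_add, ← add_mulVec, hLyap, h3, hnorm]
      rw [neg_mulVec, dotProduct_neg, h4]
    rw [← halg]
    exact key
  -- apply FTC for improper integrals
  have hg : ∀ x ∈ Set.Ici (0:ℝ), HasDerivAt (fun t => -V t)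
      (‖(WithLp.equiv 2 (Fin m → ℝ)).symm ((C * NormedSpace.exp (x • A)) *ᵥ x₀)‖ ^ 2) x := by
    intro x _
    have := (hVderiv x).neg; simp only [neg_neg] at this; exact this
  have hpos : ∀ x ∈ Set.Ioi (0:ℝ),
      (0:ℝ) ≤ ‖(WithLp.equiv 2 (Fin m → ℝ)).symm ((C * NormedSpace.exp (x • A)) *ᵥ x₀)‖ ^ 2 :=
    fun x _ => by positivity
  have htend : Tendsto (fun t => -V t) atTop (nhds 0) := by
    simpa using hV.neg
  have hint := integrableOn_Ioi_deriv_of_nonneg' hg hpos htend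
  refine ⟨hint, ?_⟩
  have := integral_Ioi_of_hasDerivAt_of_tendsto' hg hint htend
  rw [this]
  simp [V, f]
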